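/- (Claim 14, first part) Let n ≥ 3 and 2 ≤ s ≤ k−1 be integers, and let A ⊆ [k]^n be a compressed set with B_{≥1} ∪ ([s]^n ∩ B_0) ⊊ A ⊆ B_{≥1} ∪ ([s+1]^n ∩ B_0), where [m]^n = {0,…,m−1}^n. For a nonempty X ⊆ {1,…,n} let C_X = {x ∈ [k]^n : m(x) = s, R_s(x) = X, R_0(x) = ∅}, and let T be the largest nonempty subset of {1,…,n} under the binary order with C_T ∩ A ≠ ∅. If |T| ≥ 2, then for every nonempty S ⊆ {1,…,n} with S <_bin T we have C_S ⊆ A. -/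

import Mathlib

open Finset
open scoped Classical

/-- `R_i(x)`: the set of coordinates of `x` equal to `i`.
The ambient alphabet is `[k+1] = {0,…,k}`. -/
noncomputable def rset {k N : ℕ} (x : Fin N → Fin (k + 1)) (i : ℕ) : Finset (Fin N) :=
  Finset.univ.filter fun j => (x j : ℕ) = i

/-- the strict binary order on finite sets of coordinates:
`X <_bin Y` iff `X ≠ Y` and `max (X Δ Y) ∈ Y`. -/
def binLT {N : ℕ} (X Y : Finset (Fin N)) : Prop :=
  ∃ m ∈ Y, m ∉ X ∧ ∀ j : Fin N, ((j ∈ X ∧ j ∉ Y) ∨ (j ∈ Y ∧ j ∉ X)) → j ≤ m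

/-- the strict `≤`-order on `[k+1]^N`: `x < y` iff `|R_0(x)| > |R_0(y)|`, or
`|R_0(x)| = |R_0(y)|` and for the largest `i` with `R_i(x) ≠ R_i(y)` we have
`max (R_i(x) Δ R_i(y)) ∈ R_i(y)`. -/
def plt {k N : ℕ} (x y : Fin N → Fin (k + 1)) : Prop :=
  (rset y 0).card < (rset x 0).card ∨
    ((rset x 0).card = (rset y 0).card ∧
      ∃ i : ℕ, binLT (rset x i) (rset y i) ∧ ∀ j : ℕ, i < j → rset x j = rset y j)

/-- the `≤`-order on `[k+1]^N`. -/
def ple {k N : ℕ} (x y : Fin N → Fin (k + 1)) : Prop := x = y ∨ plt x y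

/-- `B` is an initial segment of the `≤`-order. -/
def isInitSeg {k N : ℕ} (B : Finset (Fin N → Fin (k + 1))) : Prop :=
  ∀ y ∈ B, ∀ x, ple x y → x ∈ B

/-- the `d`-shadow: all points obtained from a point of `A` by flipping one
nonzero coordinate to `0`. -/
noncomputable def dShadow {k N : ℕ} (A : Finset (Fin N → Fin (k + 1))) :
    Finset (Fin N → Fin (k + 1)) :=
  A.biUnion fun x =>
    (Finset.univ.filter fun i => x i ≠ 0).image fun i => Function.update x i 0

/-- the initial segment of the `≤`-order on `[k+1]^N` of cardinality `m`. -/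
noncomputable def initSeg (k N m : ℕ) : Finset (Fin N → Fin (k + 1)) :=
  Finset.univ.filter fun x => (Finset.univ.filter fun y => ple y x).card ≤ m

/-- the `C_s`-compression of `A ⊆ [k+1]^(n+1)`: replace each slice
`A_{s,t} = {y : t_s y ∈ A}` by the initial segment of the same size. -/
noncomputable def compress {k n : ℕ} (s : Fin (n + 1)) (A : Finset (Fin (n + 1) → Fin (k + 1))) :
    Finset (Fin (n + 1) → Fin (k + 1)) :=
  Finset.univ.biUnion fun t : Fin (k + 1) =>
    (initSeg k n
        (Finset.univ.filter fun y : Fin n → Fin (k + 1) => s.insertNth t y ∈ A).card).image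
      fun y => s.insertNth t y

/-- `A` is compressed if every `C_s`-compression fixes it. -/
def IsCompressed {k n : ℕ} (A : Finset (Fin (n + 1) → Fin (k + 1))) : Prop :=
  ∀ s : Fin (n + 1), compress s A = A

/-- `B_r`: points with exactly `r` zero coordinates. -/
noncomputable def Bexact (k N r : ℕ) : Finset (Fin N → Fin (k + 1)) :=
  Finset.univ.filter fun x => (rset x 0).card = r

/-- `B_{≥r}`: points with at least `r` zero coordinates. -/
noncomputable def Bge (k N r : ℕ) : Finset (Fin N → Fin (k + 1)) :=
  Finset.univ.filter fun x => r ≤ (rset x 0).card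

/-- `m(x)`: the largest coordinate value of `x`. -/
noncomputable def mval {k N : ℕ} (x : Fin N → Fin (k + 1)) : ℕ :=
  Finset.univ.sup fun i => (x i : ℕ)

/-- the class `C_X`: points with maximal coordinate `s`, attained exactly on `X`,
and exactly `r` zero coordinates. -/
noncomputable def classSet (k N s r : ℕ) (X : Finset (Fin N)) : Finset (Fin N → Fin (k + 1)) :=
  Finset.univ.filter fun x => mval x = s ∧ rset x s = X ∧ (rset x 0).card = r

/-- `[m]^N = {0,…,m−1}^N`. -/
noncomputable def box (k N m : ℕ) : Finset (Fin N → Fin (k + 1)) :=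
  Finset.univ.filter fun x => ∀ i, (x i : ℕ) < m

/-- `{1,…,s−1}^N`. -/
noncomputable def box1 (k N s : ℕ) : Finset (Fin N → Fin (k + 1)) :=
  Finset.univ.filter fun x => ∀ i, 1 ≤ (x i : ℕ) ∧ (x i : ℕ) ≤ s - 1

/-- `B` is a down-set. -/
def isDownSet {k N : ℕ} (B : Finset (Fin N → Fin (k + 1))) : Prop :=
  ∀ y ∈ B, ∀ x : Fin N → Fin (k + 1), (∀ j, (x j : ℕ) ≤ (y j : ℕ)) → x ∈ B


/-!
Compression in direction `j` turns every line `{t_j y}` of `A` into an initial segment of the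
`≤`-order, so `A` is closed under passing from `x` to a `≤`-smaller point `z` with `z j = x j`.
Two points of classes `C_S` and `C_T` with `S <_bin T` are compared at the level `s`, so this
moves `x ∈ C_T ∩ A` to all of `C_S` as soon as `S` and `T` share a coordinate. If they are
disjoint, go through `U = S ∪ {min T}`: it meets `T`, satisfies `S <_bin U <_bin T` (this is
where `|T| ≥ 2` enters: `max T` still decides `U <_bin T`), and meets `S`.
-/

@[simp]
lemma mem_rset {k N : ℕ} {x : Fin N → Fin (k + 1)} {i : ℕ} {a : Fin N} :
    a ∈ rset x i ↔ (x a : ℕ) = i := by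
  simp [rset]

lemma card_rset_eq_ite_add {k n : ℕ} (x : Fin (n + 1) → Fin (k + 1)) (j : Fin (n + 1)) (i : ℕ) :
    (rset x i).card = (if (x j : ℕ) = i then 1 else 0) + (rset (x ∘ j.succAbove) i).card := by
  simp only [rset, card_filter]
  exact Fin.sum_univ_succAbove _ j

lemma rset_eq_empty_of_mval_lt {k N : ℕ} {x : Fin N → Fin (k + 1)} {i : ℕ} (h : mval x < i) :
    rset x i = ∅ := by
  refine filter_eq_empty_iff.2 fun a _ ha => ?_
  have : (x a : ℕ) ≤ mval x := le_sup (f := fun a => (x a : ℕ)) (mem_univ a)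
  omega

section binLT

variable {N : ℕ} {S T U : Finset (Fin N)}

lemma binLT_iff : binLT S T ↔ ∃ m ∈ T, m ∉ S ∧ ∀ j, m < j → (j ∈ S ↔ j ∈ T) := by
  refine exists_congr fun m => and_congr_right fun _ => and_congr_right fun _ => ?_
  refine forall_congr' fun j => ?_
  by_cases hS : j ∈ S <;> by_cases hT : j ∈ T <;> simp [hS, hT]

lemma binLT_trans (hST : binLT S T) (hTU : binLT T U) : binLT S U := by
  rw [binLT_iff] at *
  obtain ⟨m₁, hm₁T, hm₁S, h₁⟩ := hST
  obtain ⟨m₂, hm₂U, hm₂T, h₂⟩ := hTU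
  rcases lt_trichotomy m₁ m₂ with hm | rfl | hm
  · exact ⟨m₂, hm₂U, fun h => hm₂T ((h₁ m₂ hm).1 h),
      fun j hj => (h₁ j (hm.trans hj)).trans (h₂ j hj)⟩
  · exact absurd hm₁T hm₂T
  · exact ⟨m₁, (h₂ m₁ hm).1 hm₁T, hm₁S, fun j hj => (h₁ j hj).trans (h₂ j (hm.trans hj))⟩

lemma binLT_insert_self {p : Fin N} (hp : p ∉ S) : binLT S (insert p S) := by
  refine binLT_iff.2 ⟨p, mem_insert_self p S, hp, fun j hj => ?_⟩
  simp [hj.ne']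

lemma binLT.insert_left {p q : Fin N} (h : binLT S T) (hq : q ∈ T) (hqS : q ∉ S)
    (hpq : p < q) : binLT (insert p S) T := by
  obtain ⟨m, hmT, hmS, hm⟩ := binLT_iff.1 h
  have hqm : q ≤ m := le_of_not_gt fun hmq => hqS ((hm q hmq).2 hq)
  refine binLT_iff.2 ⟨m, hmT, ?_, fun j hj => ?_⟩
  · simp [hmS, (hpq.trans_le hqm).ne']
  · simp [hm j hj, (hpq.trans_le (hqm.trans hj.le)).ne']

end binLT

lemma plt_trans {k N : ℕ} {x y z : Fin N → Fin (k + 1)} (hxy : plt x y) (hyz : plt y z) :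
    plt x z := by
  rcases hxy with hxy | ⟨hc₁, i₁, hb₁, he₁⟩ <;> rcases hyz with hyz | ⟨hc₂, i₂, hb₂, he₂⟩
  · exact Or.inl (hyz.trans hxy)
  · exact Or.inl (hc₂ ▸ hxy)
  · exact Or.inl (hc₁ ▸ hyz)
  refine Or.inr ⟨hc₁.trans hc₂, ?_⟩
  rcases lt_trichotomy i₁ i₂ with hi | rfl | hi
  · exact ⟨i₂, he₁ i₂ hi ▸ hb₂, fun l hl => (he₁ l (hi.trans hl)).trans (he₂ l hl)⟩
  · exact ⟨i₁, binLT_trans hb₁ hb₂, fun l hl => (he₁ l hl).trans (he₂ l hl)⟩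
  · exact ⟨i₁, (he₂ i₁ hi).symm ▸ hb₁, fun l hl => (he₁ l hl).trans (he₂ l (hi.trans hl))⟩

lemma binLT_rset_comp_succAbove {k n : ℕ} {x z : Fin (n + 1) → Fin (k + 1)} {j : Fin (n + 1)}
    {i : ℕ} (hj : z j = x j) (h : binLT (rset z i) (rset x i)) :
    binLT (rset (z ∘ j.succAbove) i) (rset (x ∘ j.succAbove) i) := by
  obtain ⟨m, hmx, hmz, hm⟩ := binLT_iff.1 h
  have hmj : m ≠ j := by
    rintro rfl
    simp_all
  obtain ⟨m₀, rfl⟩ := Fin.exists_succAbove_eq hmj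
  refine binLT_iff.2 ⟨m₀, by simpa using hmx, by simpa using hmz, fun a ha => ?_⟩
  simpa using hm _ ((Fin.strictMono_succAbove j) ha)

lemma plt.comp_succAbove {k n : ℕ} {x z : Fin (n + 1) → Fin (k + 1)} {j : Fin (n + 1)}
    (h : plt z x) (hj : z j = x j) : plt (z ∘ j.succAbove) (x ∘ j.succAbove) := by
  rw [plt, card_rset_eq_ite_add z j 0, card_rset_eq_ite_add x j 0, hj] at h
  rcases h with hcard | ⟨hcard, i, hi, habove⟩
  · exact Or.inl (Nat.lt_of_add_lt_add_left hcard)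
  · refine Or.inr ⟨Nat.add_left_cancel hcard, i, binLT_rset_comp_succAbove hj hi,
      fun l hl => ?_⟩
    ext a
    simpa using Finset.ext_iff.1 (habove l hl) (j.succAbove a)

lemma mem_initSeg_of_plt {k N c : ℕ} {x y : Fin N → Fin (k + 1)} (hy : y ∈ initSeg k N c)
    (hxy : plt x y) : x ∈ initSeg k N c := by
  simp only [initSeg, mem_filter, mem_univ, true_and] at hy ⊢
  refine le_trans (card_le_card fun w => ?_) hy
  simp only [mem_filter, mem_univ, true_and]
  rintro (rfl | hw)
  · exact Or.inr hxy
  · exact Or.inr (plt_trans hw hxy)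

lemma IsCompressed.mem_of_plt {k n : ℕ} {A : Finset (Fin (n + 1) → Fin (k + 1))}
    (hA : IsCompressed A) {x z : Fin (n + 1) → Fin (k + 1)} {j : Fin (n + 1)} (hx : x ∈ A)
    (hj : z j = x j) (h : plt z x) : z ∈ A := by
  rw [← hA j] at hx ⊢
  simp only [compress, mem_biUnion, mem_image, mem_univ, true_and] at hx ⊢
  obtain ⟨t, y, hy, rfl⟩ := hx
  have hyx : y = j.insertNth t y ∘ j.succAbove := by
    funext a
    simp
  refine ⟨t, z ∘ j.succAbove, mem_initSeg_of_plt hy (hyx ▸ h.comp_succAbove hj), ?_⟩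
  have ht : z j = t := by rw [hj, Fin.insertNth_apply_same]
  rw [← ht]
  exact Fin.insertNth_self_removeNth j z

section classSet

variable {k N s : ℕ} {S T : Finset (Fin N)} {x z : Fin N → Fin (k + 1)}

lemma plt_of_mem_classSet (hz : z ∈ classSet k N s 0 S) (hx : x ∈ classSet k N s 0 T)
    (h : binLT S T) : plt z x := by
  simp only [classSet, mem_filter, mem_univ, true_and] at hz hx
  refine Or.inr ⟨hz.2.2.trans hx.2.2.symm, s, hz.2.1 ▸ hx.2.1 ▸ h, fun l hl => ?_⟩
  rw [rset_eq_empty_of_mval_lt (hz.1.trans_lt hl), rset_eq_empty_of_mval_lt (hx.1.trans_lt hl)]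

lemma val_eq_of_mem_classSet {a : Fin N} (hx : x ∈ classSet k N s 0 T) (ha : a ∈ T) :
    (x a : ℕ) = s := by
  simp only [classSet, mem_filter, mem_univ, true_and] at hx
  rwa [← hx.2.1, mem_rset] at ha

lemma classSet_nonempty (hs : 1 < s) (hsk : s ≤ k) (hT : T.Nonempty) :
    (classSet k N s 0 T).Nonempty := by
  obtain ⟨w, hw⟩ : ∃ w : Fin N → Fin (k + 1), ∀ a, (w a : ℕ) = if a ∈ T then s else 1 :=
    ⟨fun a => if a ∈ T then ⟨s, by omega⟩ else ⟨1, by omega⟩,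
      fun a => by by_cases ha : a ∈ T <;> simp [ha]⟩
  obtain ⟨b, hb⟩ := hT
  refine ⟨w, mem_filter.2 ⟨mem_univ w, ?_, ?_, ?_⟩⟩
  · refine le_antisymm (Finset.sup_le fun a _ => ?_) ?_
    · rw [hw]; split_ifs <;> omega
    · exact (hw b).trans (if_pos hb) ▸ le_sup (f := fun a => (w a : ℕ)) (mem_univ b)
  · ext a
    by_cases ha : a ∈ T <;> simp [hw, ha]
    omega
  · refine card_eq_zero.2 (filter_eq_empty_iff.2 fun a _ => Nat.pos_iff_ne_zero.1 ?_)
    rw [hw]; split_ifs <;> omega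

end classSet

lemma classSet_subset_of_binLT {k n s : ℕ} {A : Finset (Fin (n + 1) → Fin (k + 1))}
    (hA : IsCompressed A) {S T : Finset (Fin (n + 1))} {x : Fin (n + 1) → Fin (k + 1)}
    (hx : x ∈ classSet k (n + 1) s 0 T) (hxA : x ∈ A) (hST : binLT S T)
    (hmeet : (S ∩ T).Nonempty) : classSet k (n + 1) s 0 S ⊆ A := by
  obtain ⟨j, hj⟩ := hmeet
  rw [mem_inter] at hj
  intro z hz
  refine hA.mem_of_plt (j := j) hxA (Fin.val_injective ?_) (plt_of_mem_classSet hz hx hST)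
  rw [val_eq_of_mem_classSet hz hj.1, val_eq_of_mem_classSet hx hj.2]

theorem claim14_first_general (k n s : ℕ) (hs1 : 2 ≤ s) (hs2 : s ≤ k)
    (A : Finset (Fin (n + 1) → Fin (k + 1))) (hA : IsCompressed A)
    (T : Finset (Fin (n + 1))) (hTne : T.Nonempty)
    (hT : (classSet k (n + 1) s 0 T ∩ A).Nonempty)
    (hTcard : 2 ≤ T.card) :
    ∀ S : Finset (Fin (n + 1)), S.Nonempty → binLT S T →
      classSet k (n + 1) s 0 S ⊆ A := by
  obtain ⟨x, hx⟩ := hT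
  obtain ⟨hxT, hxA⟩ := mem_inter.1 hx
  intro S hS hST
  by_cases hmeet : (S ∩ T).Nonempty
  · exact classSet_subset_of_binLT hA hxT hxA hST hmeet
  set p := T.min' hTne
  have hp : p ∈ T := min'_mem T hTne
  have hq : T.max' hTne ∈ T := max'_mem T hTne
  have hpS : p ∉ S := fun h => hmeet ⟨p, mem_inter.2 ⟨h, hp⟩⟩
  have hqS : T.max' hTne ∉ S := fun h => hmeet ⟨_, mem_inter.2 ⟨h, hq⟩⟩
  have hUT : binLT (insert p S) T := hST.insert_left hq hqS (min'_lt_max'_of_card T hTcard)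
  obtain ⟨w, hw⟩ : (classSet k (n + 1) s 0 (insert p S)).Nonempty :=
    classSet_nonempty hs1 hs2 (insert_nonempty p S)
  have hwA : w ∈ A :=
    classSet_subset_of_binLT hA hxT hxA hUT ⟨p, mem_inter.2 ⟨mem_insert_self p S, hp⟩⟩ hw
  exact classSet_subset_of_binLT hA hw hwA (binLT_insert_self hpS)
    (by rwa [inter_eq_left.2 (subset_insert p S)])

/-- **Claim 14, first part.** Let `n ≥ 3`, `2 ≤ s ≤ k − 1`, and let `A ⊆ [k]^n` be
compressed with `B_{≥1} ∪ ([s]^n ∩ B_0) ⊊ A ⊆ B_{≥1} ∪ ([s+1]^n ∩ B_0)`. Let `T` be the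
largest nonempty set under the binary order with `C_T ∩ A ≠ ∅`. If `|T| ≥ 2`, then for
every nonempty `S` with `S <_bin T` we have `C_S ⊆ A`.
(Dimension `n ≥ 3` is rendered as `n + 1` with `n ≥ 2`; alphabet `[k]` as `Fin (k+1)`,
so `s ≤ k`.) -/
theorem claim14_first (k n s : ℕ) (hn : 2 ≤ n) (hs1 : 2 ≤ s) (hs2 : s ≤ k)
    (A : Finset (Fin (n + 1) → Fin (k + 1))) (hA : IsCompressed A)
    (hlow : Bge k (n + 1) 1 ∪ (box k (n + 1) s ∩ Bexact k (n + 1) 0) ⊂ A)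
    (hhigh : A ⊆ Bge k (n + 1) 1 ∪ (box k (n + 1) (s + 1) ∩ Bexact k (n + 1) 0))
    (T : Finset (Fin (n + 1))) (hTne : T.Nonempty)
    (hT : (classSet k (n + 1) s 0 T ∩ A).Nonempty)
    (hTmax : ∀ S : Finset (Fin (n + 1)), S.Nonempty →
      (classSet k (n + 1) s 0 S ∩ A).Nonempty → S = T ∨ binLT S T)
    (hTcard : 2 ≤ T.card) :
    ∀ S : Finset (Fin (n + 1)), S.Nonempty → binLT S T →
      classSet k (n + 1) s 0 S ⊆ A :=
  claim14_first_general k n s hs1 hs2 A hA T hTne hT hTcard
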